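/- Equivalence of the two-filter smoother and the RTS smoother: under the linear-Gaussian model assumptions, suppose additionally that P_{k+1|k} = F_k P_{k|k} F_kᵀ + Q_k is invertible for k = 1, …, T−1. Then for every k = 1, …, T−1, the matrix I + P_{k|k} J_{k|k+1:T} is invertible and the two-filter combination formulas reproduce the RTS smoother output: (I + P_{k|k} J_{k|k+1:T})⁻¹ (x̄_{k|k} + P_{k|k} η_{k|k+1:T}) = x̄_{k|T} and (I + P_{k|k} J_{k|k+1:T})⁻¹ P_{k|k} = P_{k|T}. -/

import Mathlib

open Matrix

/-- The data of a linear-Gaussian state-space model. -/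
structure LGModel (n m : ℕ) where
  T : ℕ
  F : ℕ → Matrix (Fin n) (Fin n) ℝ
  H : ℕ → Matrix (Fin m) (Fin n) ℝ
  u : ℕ → Fin n → ℝ
  d : ℕ → Fin m → ℝ
  Q : ℕ → Matrix (Fin n) (Fin n) ℝ
  R : ℕ → Matrix (Fin m) (Fin m) ℝ
  y : ℕ → Fin m → ℝ
  x0 : Fin n → ℝ
  P0 : Matrix (Fin n) (Fin n) ℝ

variable {n m : ℕ}

/-- The Kalman filter recursion: `kf M k = (x̄_{k|k}, P_{k|k})`. -/
noncomputable def LGModel.kf (M : LGModel n m) : ℕ → (Fin n → ℝ) × Matrix (Fin n) (Fin n) ℝ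
  | 0 => (M.x0, M.P0)
  | k + 1 =>
    let prev := LGModel.kf M k
    let xp := M.F k *ᵥ prev.1 + M.u k
    let Pp := M.F k * prev.2 * (M.F k)ᵀ + M.Q k
    let S := M.H (k + 1) * Pp * (M.H (k + 1))ᵀ + M.R (k + 1)
    let K := Pp * (M.H (k + 1))ᵀ * S⁻¹
    (xp + K *ᵥ (M.y (k + 1) - M.H (k + 1) *ᵥ xp - M.d (k + 1)),
     Pp - K * M.H (k + 1) * Pp)

/-- The Rauch–Tung–Striebel backward recursion: `rts M j = (x̄_{T-j|T}, P_{T-j|T})`. -/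
noncomputable def LGModel.rts (M : LGModel n m) : ℕ → (Fin n → ℝ) × Matrix (Fin n) (Fin n) ℝ
  | 0 => M.kf M.T
  | j + 1 =>
    let k := M.T - j - 1
    let P := (M.kf k).2
    let Pp := M.F k * P * (M.F k)ᵀ + M.Q k
    let G := P * (M.F k)ᵀ * Pp⁻¹
    ((M.kf k).1 + G *ᵥ ((LGModel.rts M j).1 - (M.F k *ᵥ (M.kf k).1 + M.u k)),
     P + G * ((LGModel.rts M j).2 - Pp) * Gᵀ)

/-- The backward information filter recursion (updated quantities):
`bif M j = (η_{T-j|T-j:T}, J_{T-j|T-j:T})`. -/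
noncomputable def LGModel.bif (M : LGModel n m) : ℕ → (Fin n → ℝ) × Matrix (Fin n) (Fin n) ℝ
  | 0 => (((M.H M.T)ᵀ * (M.R M.T)⁻¹) *ᵥ (M.y M.T - M.d M.T),
          (M.H M.T)ᵀ * (M.R M.T)⁻¹ * M.H M.T)
  | j + 1 =>
    let k := M.T - j - 1
    let prev := LGModel.bif M j
    let G := (M.F k)ᵀ * (1 + prev.2 * M.Q k)⁻¹
    (G *ᵥ (prev.1 - prev.2 *ᵥ M.u k) + ((M.H k)ᵀ * (M.R k)⁻¹) *ᵥ (M.y k - M.d k),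
     G * prev.2 * M.F k + (M.H k)ᵀ * (M.R k)⁻¹ * M.H k)

/-- The predicted backward information quantities `(η_{k|k+1:T}, J_{k|k+1:T})`. -/
noncomputable def LGModel.bpred (M : LGModel n m) (k : ℕ) :
    (Fin n → ℝ) × Matrix (Fin n) (Fin n) ℝ :=
  let prev := M.bif (M.T - k - 1)
  let G := (M.F k)ᵀ * (1 + prev.2 * M.Q k)⁻¹
  (G *ᵥ (prev.1 - prev.2 *ᵥ M.u k), G * prev.2 * M.F k)


/-!
For a mean–covariance pair `(x, P)` and an information pair `(η, J)` let
`twoFilterCombine (x, P) (η, J) = ((1 + P J)⁻¹ (x + P η), (1 + P J)⁻¹ P)`, the Gaussian fusion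
of the two. Fusing twice is fusing once with the sum of the information pairs, and a Kalman
measurement update is fusion with the measurement information `(Hᵀ R⁻¹ z, Hᵀ R⁻¹ H)`. A
Woodbury-type computation shows that fusing a filtered estimate with backward-predicted
information is one RTS step applied to the fusion of the predicted estimate with the updated
backward information. Backward induction from time `T` (where `x̄_{T|T}` is the fusion of
`x̄_{T|T-1}` with the measurement information) then identifies the two-filter formulas with the
RTS output. Every `1 + A B` that is inverted has `A, B` positive semidefinite, hence
`det (1 + A B) = det (1 + √B A √B) > 0`.
-/

section Algebra

variable {α : Type*} [CommRing α] {ι κ : Type*} [Fintype ι] [DecidableEq ι] [Fintype κ]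
  [DecidableEq κ]

noncomputable def twoFilterCombine (f b : (ι → α) × Matrix ι ι α) : (ι → α) × Matrix ι ι α :=
  ((1 + f.2 * b.2)⁻¹ *ᵥ (f.1 + f.2 *ᵥ b.1), (1 + f.2 * b.2)⁻¹ * f.2)

noncomputable def kalmanPredict (f : (ι → α) × Matrix ι ι α) (F Q : Matrix ι ι α) (u : ι → α) :
    (ι → α) × Matrix ι ι α :=
  (F *ᵥ f.1 + u, F * f.2 * Fᵀ + Q)

noncomputable def kalmanUpdate (f : (ι → α) × Matrix ι ι α) (H : Matrix κ ι α) (R : Matrix κ κ α)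
    (z : κ → α) : (ι → α) × Matrix ι ι α :=
  let K := f.2 * Hᵀ * (H * f.2 * Hᵀ + R)⁻¹
  (f.1 + K *ᵥ (z - H *ᵥ f.1), f.2 - K * H * f.2)

noncomputable def measurementInfo (H : Matrix κ ι α) (R : Matrix κ κ α) (z : κ → α) :
    (ι → α) × Matrix ι ι α :=
  ((Hᵀ * R⁻¹) *ᵥ z, Hᵀ * R⁻¹ * H)

noncomputable def backwardPredict (b : (ι → α) × Matrix ι ι α) (F Q : Matrix ι ι α) (u : ι → α) :
    (ι → α) × Matrix ι ι α :=
  ((Fᵀ * (1 + b.2 * Q)⁻¹) *ᵥ (b.1 - b.2 *ᵥ u), Fᵀ * (1 + b.2 * Q)⁻¹ * b.2 * F)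

noncomputable def rtsStep (f s : (ι → α) × Matrix ι ι α) (F Q : Matrix ι ι α) (u : ι → α) :
    (ι → α) × Matrix ι ι α :=
  let G := f.2 * Fᵀ * (F * f.2 * Fᵀ + Q)⁻¹
  (f.1 + G *ᵥ (s.1 - (F *ᵥ f.1 + u)), f.2 + G * (s.2 - (F * f.2 * Fᵀ + Q)) * Gᵀ)

theorem inv_one_add_mul_mul_comm {A : Matrix ι κ α} {B : Matrix κ ι α}
    (h : IsUnit (1 + A * B).det) : (1 + A * B)⁻¹ * A = A * (1 + B * A)⁻¹ := by
  have h' : IsUnit (1 + B * A).det := by rwa [det_one_add_mul_comm] at h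
  have hA : (1 + A * B) * A = A * (1 + B * A) := by
    simp only [Matrix.add_mul, Matrix.mul_add, Matrix.one_mul, Matrix.mul_one, Matrix.mul_assoc]
  calc (1 + A * B)⁻¹ * A = (1 + A * B)⁻¹ * (A * (1 + B * A) * (1 + B * A)⁻¹) := by
        rw [mul_nonsing_inv_cancel_right _ _ h']
    _ = (1 + A * B)⁻¹ * ((1 + A * B) * (A * (1 + B * A)⁻¹)) := by
        rw [← hA, Matrix.mul_assoc]
    _ = A * (1 + B * A)⁻¹ := nonsing_inv_mul_cancel_left _ _ h

theorem twoFilterCombine_twoFilterCombine (f b₁ b₂ : (ι → α) × Matrix ι ι α)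
    (h : IsUnit (1 + f.2 * b₁.2).det) :
    twoFilterCombine (twoFilterCombine f b₁) b₂ = twoFilterCombine f (b₁ + b₂) := by
  obtain ⟨x, P⟩ := f
  obtain ⟨η₁, J₁⟩ := b₁
  obtain ⟨η₂, J₂⟩ := b₂
  dsimp only at h
  have hinv : (1 + (1 + P * J₁)⁻¹ * P * J₂)⁻¹ * (1 + P * J₁)⁻¹ = (1 + P * (J₁ + J₂))⁻¹ := by
    have hfactor :
        1 + (1 + P * J₁)⁻¹ * P * J₂ = (1 + P * J₁)⁻¹ * (1 + P * (J₁ + J₂)) := by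
      calc 1 + (1 + P * J₁)⁻¹ * P * J₂
          = (1 + P * J₁)⁻¹ * (1 + P * J₁) + (1 + P * J₁)⁻¹ * P * J₂ := by
            rw [nonsing_inv_mul _ h]
        _ = (1 + P * J₁)⁻¹ * (1 + P * (J₁ + J₂)) := by noncomm_ring
    rw [hfactor, Matrix.mul_inv_rev, nonsing_inv_nonsing_inv _ h, Matrix.mul_assoc,
      mul_nonsing_inv _ h, Matrix.mul_one]
  refine Prod.ext ?_ ?_
  · simp only [twoFilterCombine, Prod.mk_add_mk, ← hinv, ← mulVec_mulVec, mulVec_add]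
    simp only [mulVec_mulVec, Matrix.mul_assoc, add_assoc]
  · simp only [twoFilterCombine, Prod.mk_add_mk, ← hinv, Matrix.mul_assoc]

theorem inv_mul_mul_inv_add_eq_inv_sub_inv {A R : Matrix κ κ α} (hR : IsUnit R.det)
    (hS : IsUnit (A + R).det) : R⁻¹ * A * (A + R)⁻¹ = R⁻¹ - (A + R)⁻¹ := by
  calc R⁻¹ * A * (A + R)⁻¹ = R⁻¹ * (A + R) * (A + R)⁻¹ - R⁻¹ * R * (A + R)⁻¹ := by noncomm_ring
    _ = R⁻¹ - (A + R)⁻¹ := by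
      rw [mul_nonsing_inv_cancel_right _ _ hS, nonsing_inv_mul _ hR, Matrix.one_mul]

theorem kalmanUpdate_eq_twoFilterCombine (f : (ι → α) × Matrix ι ι α) (H : Matrix κ ι α)
    {R : Matrix κ κ α} (z : κ → α) (hR : IsUnit R.det) (hS : IsUnit (H * f.2 * Hᵀ + R).det) :
    kalmanUpdate f H R z = twoFilterCombine f (measurementInfo H R z) := by
  obtain ⟨x, P⟩ := f
  dsimp only at hS
  have hRS := inv_mul_mul_inv_add_eq_inv_sub_inv hR hS
  have hright : (1 + P * (Hᵀ * R⁻¹ * H)) * (1 - P * Hᵀ * (H * P * Hᵀ + R)⁻¹ * H) = 1 := by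
    calc (1 + P * (Hᵀ * R⁻¹ * H)) * (1 - P * Hᵀ * (H * P * Hᵀ + R)⁻¹ * H)
        = 1 + P * Hᵀ *
            (R⁻¹ - (H * P * Hᵀ + R)⁻¹ - R⁻¹ * (H * P * Hᵀ) * (H * P * Hᵀ + R)⁻¹) * H := by
          simp only [Matrix.add_mul, Matrix.mul_sub, Matrix.sub_mul, Matrix.one_mul,
            Matrix.mul_one, Matrix.mul_assoc]
          abel
      _ = 1 := by rw [hRS, sub_self, Matrix.mul_zero, Matrix.zero_mul, add_zero]
  have hgain : (1 + P * (Hᵀ * R⁻¹ * H)) * (P * Hᵀ * (H * P * Hᵀ + R)⁻¹) = P * (Hᵀ * R⁻¹) := by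
    calc (1 + P * (Hᵀ * R⁻¹ * H)) * (P * Hᵀ * (H * P * Hᵀ + R)⁻¹)
        = P * Hᵀ * ((H * P * Hᵀ + R)⁻¹ + R⁻¹ * (H * P * Hᵀ) * (H * P * Hᵀ + R)⁻¹) := by
          simp only [Matrix.mul_add, Matrix.add_mul, Matrix.one_mul, Matrix.mul_assoc]
      _ = P * (Hᵀ * R⁻¹) := by rw [hRS, add_sub_cancel, Matrix.mul_assoc]
  have hinv := inv_eq_right_inv hright
  have hleft : (1 - P * Hᵀ * (H * P * Hᵀ + R)⁻¹ * H) * (1 + P * (Hᵀ * R⁻¹ * H)) = 1 := by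
    rw [← hinv]; exact nonsing_inv_mul _ (isUnit_det_of_right_inverse hright)
  have hK : (1 - P * Hᵀ * (H * P * Hᵀ + R)⁻¹ * H) * (P * (Hᵀ * R⁻¹)) =
      P * Hᵀ * (H * P * Hᵀ + R)⁻¹ := by
    rw [← hgain, ← Matrix.mul_assoc, hleft, Matrix.one_mul]
  simp only [kalmanUpdate, twoFilterCombine, measurementInfo, hinv]
  refine Prod.ext ?_ ?_
  · dsimp only
    rw [mulVec_add, mulVec_mulVec z P, mulVec_mulVec, hK]
    simp only [sub_mulVec, one_mulVec, mulVec_sub, mulVec_mulVec]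
    abel
  · rw [Matrix.sub_mul, Matrix.one_mul]

theorem smoother_gain_eq {P F Q J : Matrix ι ι α}
    (hJQ : IsUnit (1 + J * Q).det) (hJPp : IsUnit (1 + J * (F * P * Fᵀ + Q)).det)
    (hD : IsUnit (1 + P * (Fᵀ * (1 + J * Q)⁻¹ * J * F)).det) :
    (1 + P * (Fᵀ * (1 + J * Q)⁻¹ * J * F))⁻¹ * (P * Fᵀ * (1 + J * Q)⁻¹) =
      P * Fᵀ * (1 + J * (F * P * Fᵀ + Q))⁻¹ := by
  have hfactor : (1 + J * Q)⁻¹ * (1 + J * (F * P * Fᵀ + Q)) =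
      1 + (1 + J * Q)⁻¹ * J * (F * P * Fᵀ) := by
    calc (1 + J * Q)⁻¹ * (1 + J * (F * P * Fᵀ + Q))
        = (1 + J * Q)⁻¹ * (1 + J * Q) + (1 + J * Q)⁻¹ * J * (F * P * Fᵀ) := by noncomm_ring
      _ = 1 + (1 + J * Q)⁻¹ * J * (F * P * Fᵀ) := by rw [nonsing_inv_mul _ hJQ]
  have hmul : (1 + P * (Fᵀ * (1 + J * Q)⁻¹ * J * F)) *
      (P * Fᵀ * (1 + J * (F * P * Fᵀ + Q))⁻¹) = P * Fᵀ * (1 + J * Q)⁻¹ := by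
    calc (1 + P * (Fᵀ * (1 + J * Q)⁻¹ * J * F)) * (P * Fᵀ * (1 + J * (F * P * Fᵀ + Q))⁻¹)
        = P * Fᵀ * (1 + J * Q)⁻¹ * (1 + J * (F * P * Fᵀ + Q)) *
            (1 + J * (F * P * Fᵀ + Q))⁻¹ := by
          rw [Matrix.mul_assoc (P * Fᵀ), hfactor]; noncomm_ring
      _ = P * Fᵀ * (1 + J * Q)⁻¹ := mul_nonsing_inv_cancel_right _ _ hJPp
  rw [← hmul]
  exact nonsing_inv_mul_cancel_left _ _ hD

theorem twoFilterCombine_backwardPredict_eq (x : ι → α) (P : Matrix ι ι α) (η : ι → α)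
    (J F Q : Matrix ι ι α) (u : ι → α) (hJQ : IsUnit (1 + J * Q).det)
    (hJPp : IsUnit (1 + J * (F * P * Fᵀ + Q)).det)
    (hD : IsUnit (1 + P * (Fᵀ * (1 + J * Q)⁻¹ * J * F)).det) :
    twoFilterCombine (x, P) (backwardPredict (η, J) F Q u) =
      (x + (P * Fᵀ * (1 + J * (F * P * Fᵀ + Q))⁻¹) *ᵥ (η - J *ᵥ (F *ᵥ x + u)),
        P - P * Fᵀ * (1 + J * (F * P * Fᵀ + Q))⁻¹ * J * F * P) := by
  have hgain := smoother_gain_eq hJQ hJPp hD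
  set L := P * Fᵀ * (1 + J * (F * P * Fᵀ + Q))⁻¹
  have hsplit : (1 + P * (Fᵀ * (1 + J * Q)⁻¹ * J * F))⁻¹ = 1 - L * (J * F) := by
    calc (1 + P * (Fᵀ * (1 + J * Q)⁻¹ * J * F))⁻¹
        = (1 + P * (Fᵀ * (1 + J * Q)⁻¹ * J * F))⁻¹ * (1 + P * (Fᵀ * (1 + J * Q)⁻¹ * J * F)) -
          (1 + P * (Fᵀ * (1 + J * Q)⁻¹ * J * F))⁻¹ * (P * Fᵀ * (1 + J * Q)⁻¹) * (J * F) := by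
          noncomm_ring
      _ = 1 - L * (J * F) := by rw [nonsing_inv_mul _ hD, hgain]
  rw [hsplit] at hgain
  simp only [twoFilterCombine, backwardPredict, hsplit, Prod.mk.injEq]
  constructor
  · rw [mulVec_add, mulVec_mulVec _ P, ← Matrix.mul_assoc P, mulVec_mulVec _ (1 - L * (J * F)),
      hgain]
    simp only [sub_mulVec, one_mulVec, mulVec_sub, mulVec_add, mulVec_mulVec]
    abel
  · simp only [Matrix.sub_mul, Matrix.one_mul, Matrix.mul_assoc]

theorem twoFilterCombine_sub_self (x : ι → α) (P : Matrix ι ι α) (η : ι → α) (J : Matrix ι ι α)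
    (h : IsUnit (1 + P * J).det) :
    twoFilterCombine (x, P) (η, J) - (x, P) =
      ((P * (1 + J * P)⁻¹) *ᵥ (η - J *ᵥ x), -(P * (1 + J * P)⁻¹ * J * P)) := by
  have hpush : (1 + P * J)⁻¹ * P = P * (1 + J * P)⁻¹ := inv_one_add_mul_mul_comm h
  simp only [twoFilterCombine, Prod.mk_sub_mk, Prod.mk.injEq]
  constructor
  · calc (1 + P * J)⁻¹ *ᵥ (x + P *ᵥ η) - x
        = (1 + P * J)⁻¹ *ᵥ (x + P *ᵥ η - (1 + P * J) *ᵥ x) := by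
          rw [mulVec_sub, mulVec_mulVec, nonsing_inv_mul _ h, one_mulVec]
      _ = ((1 + P * J)⁻¹ * P) *ᵥ (η - J *ᵥ x) := by
          rw [← mulVec_mulVec]
          congr 1
          simp only [add_mulVec, one_mulVec, mulVec_sub, mulVec_mulVec]
          abel
      _ = (P * (1 + J * P)⁻¹) *ᵥ (η - J *ᵥ x) := by rw [hpush]
  · calc (1 + P * J)⁻¹ * P - P = (1 + P * J)⁻¹ * P - (1 + P * J)⁻¹ * (1 + P * J) * P := by
          rw [nonsing_inv_mul _ h, Matrix.one_mul]
      _ = -((1 + P * J)⁻¹ * P * J * P) := by noncomm_ring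
      _ = -(P * (1 + J * P)⁻¹ * J * P) := by rw [hpush]

theorem rtsStep_twoFilterCombine_kalmanPredict_eq (x : ι → α) (P : Matrix ι ι α) (η : ι → α)
    (J F Q : Matrix ι ι α) (u : ι → α) (hP : P.IsSymm) (hQ : Q.IsSymm)
    (hPp : IsUnit (F * P * Fᵀ + Q).det) (hPpJ : IsUnit (1 + (F * P * Fᵀ + Q) * J).det) :
    rtsStep (x, P) (twoFilterCombine (kalmanPredict (x, P) F Q u) (η, J)) F Q u =
      (x + (P * Fᵀ * (1 + J * (F * P * Fᵀ + Q))⁻¹) *ᵥ (η - J *ᵥ (F *ᵥ x + u)),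
        P - P * Fᵀ * (1 + J * (F * P * Fᵀ + Q))⁻¹ * J * F * P) := by
  set Pp := F * P * Fᵀ + Q with hPp_def
  have hdiff := twoFilterCombine_sub_self (F *ᵥ x + u) Pp η J hPpJ
  simp only [Prod.ext_iff, Prod.fst_sub, Prod.snd_sub] at hdiff
  have hPpT : Ppᵀ = Pp := by
    simp only [hPp_def, transpose_add, transpose_mul, transpose_transpose, hP.eq, hQ.eq,
      Matrix.mul_assoc]
  have hGT : (P * Fᵀ * Pp⁻¹)ᵀ = Pp⁻¹ * (F * P) := by
    rw [transpose_mul, transpose_mul, transpose_nonsing_inv, hPpT, transpose_transpose, hP.eq]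
  have hG : P * Fᵀ * Pp⁻¹ * (Pp * (1 + J * Pp)⁻¹) = P * Fᵀ * (1 + J * Pp)⁻¹ := by
    rw [← Matrix.mul_assoc, nonsing_inv_mul_cancel_right _ _ hPp]
  have hcorr : P * Fᵀ * Pp⁻¹ * (Pp * (1 + J * Pp)⁻¹ * J * Pp) * (Pp⁻¹ * (F * P)) =
      P * Fᵀ * (1 + J * Pp)⁻¹ * J * F * P := by
    calc P * Fᵀ * Pp⁻¹ * (Pp * (1 + J * Pp)⁻¹ * J * Pp) * (Pp⁻¹ * (F * P))
        = P * Fᵀ * Pp⁻¹ * (Pp * (1 + J * Pp)⁻¹) * J * (Pp * Pp⁻¹) * F * P := by noncomm_ring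
      _ = P * Fᵀ * (1 + J * Pp)⁻¹ * J * F * P := by
          rw [hG, mul_nonsing_inv _ hPp, Matrix.mul_one]
  simp only [rtsStep, kalmanPredict, Prod.mk.injEq]
  constructor
  · rw [hdiff.1, mulVec_mulVec, hG]
  · rw [hdiff.2, hGT, Matrix.mul_neg, Matrix.neg_mul, hcorr, sub_eq_add_neg]

end Algebra

section PosSemidef

open scoped MatrixOrder ComplexOrder

variable {𝕜 : Type*} [RCLike 𝕜] {ι : Type*} [Fintype ι] [DecidableEq ι]

theorem isUnit_det_one_add_mul_of_posSemidef {A B : Matrix ι ι 𝕜} (hA : A.PosSemidef)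
    (hB : B.PosSemidef) : IsUnit (1 + A * B).det := by
  have hsqrt : (CFC.sqrt B).IsHermitian := (CFC.sqrt_nonneg B).posSemidef.1
  have hpd : (1 + CFC.sqrt B * A * CFC.sqrt B).PosDef := by
    refine PosDef.one.add_posSemidef ?_
    simpa only [hsqrt.eq] using hA.conjTranspose_mul_mul_same (CFC.sqrt B)
  have hdet : (1 + A * B).det = (1 + CFC.sqrt B * A * CFC.sqrt B).det := by
    calc (1 + A * B).det = (1 + A * CFC.sqrt B * CFC.sqrt B).det := by
          rw [Matrix.mul_assoc A, CFC.sqrt_mul_sqrt_self B hB.nonneg]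
      _ = (1 + CFC.sqrt B * A * CFC.sqrt B).det := by
          rw [det_one_add_mul_comm, Matrix.mul_assoc]
  rw [hdet]
  exact hpd.det_pos.ne'.isUnit

theorem posSemidef_inv_one_add_mul_mul {A B : Matrix ι ι 𝕜} (hA : A.PosSemidef)
    (hB : B.PosSemidef) : ((1 + A * B)⁻¹ * A).PosSemidef := by
  have hAB := isUnit_det_one_add_mul_of_posSemidef hA hB
  have hBA := isUnit_det_one_add_mul_of_posSemidef hB hA
  rw [inv_one_add_mul_mul_comm hAB]
  refine PosSemidef.of_dotProduct_mulVec_nonneg ?_ fun x ↦ ?_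
  · rw [IsHermitian, conjTranspose_mul, conjTranspose_nonsing_inv, conjTranspose_add,
      conjTranspose_one, conjTranspose_mul, hA.1.eq, hB.1.eq, ← inv_one_add_mul_mul_comm hAB]
  · obtain ⟨y, rfl⟩ : ∃ y, (1 + B * A) *ᵥ y = x :=
      ⟨(1 + B * A)⁻¹ *ᵥ x, by rw [mulVec_mulVec, mul_nonsing_inv _ hBA, one_mulVec]⟩
    have hexpand : star ((1 + B * A) *ᵥ y) ⬝ᵥ ((A * (1 + B * A)⁻¹) *ᵥ ((1 + B * A) *ᵥ y)) =
        star y ⬝ᵥ (A *ᵥ y) + star (A *ᵥ y) ⬝ᵥ (B *ᵥ (A *ᵥ y)) := by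
      rw [mulVec_mulVec, Matrix.mul_assoc, nonsing_inv_mul _ hBA, Matrix.mul_one, add_mulVec,
        one_mulVec, star_add, add_dotProduct, ← mulVec_mulVec, star_mulVec, ← dotProduct_mulVec,
        hB.1.eq]
    rw [hexpand]
    exact add_nonneg (hA.dotProduct_mulVec_nonneg y) (hB.dotProduct_mulVec_nonneg (A *ᵥ y))

end PosSemidef

section Real

variable {ι κ : Type*} [Fintype ι] [Fintype κ] [DecidableEq κ]

theorem posSemidef_kalmanPredict_snd {f : (ι → ℝ) × Matrix ι ι ℝ} (F : Matrix ι ι ℝ)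
    {Q : Matrix ι ι ℝ} (u : ι → ℝ) (hP : f.2.PosSemidef) (hQ : Q.PosSemidef) :
    (kalmanPredict f F Q u).2.PosSemidef := by
  simpa only [kalmanPredict, conjTranspose_eq_transpose_of_trivial] using
    (hP.mul_mul_conjTranspose_same F).add hQ

theorem posSemidef_measurementInfo_snd (H : Matrix κ ι ℝ) {R : Matrix κ κ ℝ} (z : κ → ℝ)
    (hR : R.PosDef) : (measurementInfo H R z).2.PosSemidef := by
  simpa only [measurementInfo, conjTranspose_eq_transpose_of_trivial] using
    hR.inv.posSemidef.conjTranspose_mul_mul_same H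

theorem posSemidef_backwardPredict_snd [DecidableEq ι] {b : (ι → ℝ) × Matrix ι ι ℝ}
    (F : Matrix ι ι ℝ) {Q : Matrix ι ι ℝ} (u : ι → ℝ) (hJ : b.2.PosSemidef) (hQ : Q.PosSemidef) :
    (backwardPredict b F Q u).2.PosSemidef := by
  simpa only [backwardPredict, conjTranspose_eq_transpose_of_trivial, Matrix.mul_assoc] using
    (posSemidef_inv_one_add_mul_mul hJ hQ).conjTranspose_mul_mul_same F

theorem kalmanUpdate_eq_twoFilterCombine_of_posDef [DecidableEq ι]
    {f : (ι → ℝ) × Matrix ι ι ℝ} (H : Matrix κ ι ℝ) {R : Matrix κ κ ℝ} (z : κ → ℝ)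
    (hP : f.2.PosSemidef) (hR : R.PosDef) :
    kalmanUpdate f H R z = twoFilterCombine f (measurementInfo H R z) := by
  have hS : (H * f.2 * Hᵀ + R).PosDef := by
    simpa only [conjTranspose_eq_transpose_of_trivial] using
      PosDef.posSemidef_add (hP.mul_mul_conjTranspose_same H) hR
  exact kalmanUpdate_eq_twoFilterCombine f H z hR.det_pos.ne'.isUnit hS.det_pos.ne'.isUnit

theorem twoFilterCombine_backwardPredict_eq_rtsStep [DecidableEq ι]
    {f b : (ι → ℝ) × Matrix ι ι ℝ} (F : Matrix ι ι ℝ) {Q : Matrix ι ι ℝ} (u : ι → ℝ)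
    (hP : f.2.PosSemidef) (hJ : b.2.PosSemidef) (hQ : Q.PosSemidef)
    (hPp : IsUnit (F * f.2 * Fᵀ + Q).det) :
    twoFilterCombine f (backwardPredict b F Q u) =
      rtsStep f (twoFilterCombine (kalmanPredict f F Q u) b) F Q u := by
  obtain ⟨x, P⟩ := f
  obtain ⟨η, J⟩ := b
  dsimp only at hP hJ hPp
  have hPp_psd := posSemidef_kalmanPredict_snd (f := (x, P)) F u hP hQ
  rw [twoFilterCombine_backwardPredict_eq x P η J F Q u
      (isUnit_det_one_add_mul_of_posSemidef hJ hQ)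
      (isUnit_det_one_add_mul_of_posSemidef hJ hPp_psd)
      (isUnit_det_one_add_mul_of_posSemidef hP
        (posSemidef_backwardPredict_snd (b := (η, J)) F u hJ hQ)),
    rtsStep_twoFilterCombine_kalmanPredict_eq x P η J F Q u (isHermitian_iff_isSymm.mp hP.1)
      (isHermitian_iff_isSymm.mp hQ.1) hPp (isUnit_det_one_add_mul_of_posSemidef hPp_psd hJ)]

end Real

namespace LGModel

theorem kf_succ (M : LGModel n m) (k : ℕ) :
    M.kf (k + 1) = kalmanUpdate (kalmanPredict (M.kf k) (M.F k) (M.Q k) (M.u k)) (M.H (k + 1))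
      (M.R (k + 1)) (M.y (k + 1) - M.d (k + 1)) := by
  rw [kf, kalmanUpdate, sub_right_comm]
  rfl

theorem rts_succ (M : LGModel n m) (j : ℕ) :
    M.rts (j + 1) = rtsStep (M.kf (M.T - j - 1)) (M.rts j) (M.F (M.T - j - 1))
      (M.Q (M.T - j - 1)) (M.u (M.T - j - 1)) := rfl

theorem bif_zero (M : LGModel n m) :
    M.bif 0 = measurementInfo (M.H M.T) (M.R M.T) (M.y M.T - M.d M.T) := rfl

theorem bif_succ (M : LGModel n m) (j : ℕ) :
    M.bif (j + 1) = backwardPredict (M.bif j) (M.F (M.T - j - 1)) (M.Q (M.T - j - 1))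
      (M.u (M.T - j - 1)) + measurementInfo (M.H (M.T - j - 1)) (M.R (M.T - j - 1))
      (M.y (M.T - j - 1) - M.d (M.T - j - 1)) := rfl

theorem bpred_eq (M : LGModel n m) (k : ℕ) :
    M.bpred k = backwardPredict (M.bif (M.T - k - 1)) (M.F k) (M.Q k) (M.u k) := rfl

theorem kf_succ_eq_twoFilterCombine (M : LGModel n m) (k : ℕ) (hP : (M.kf k).2.PosSemidef)
    (hQ : (M.Q k).PosSemidef) (hR : (M.R (k + 1)).PosDef) :
    M.kf (k + 1) = twoFilterCombine (kalmanPredict (M.kf k) (M.F k) (M.Q k) (M.u k))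
      (measurementInfo (M.H (k + 1)) (M.R (k + 1)) (M.y (k + 1) - M.d (k + 1))) := by
  rw [kf_succ]
  exact kalmanUpdate_eq_twoFilterCombine_of_posDef _ _ (posSemidef_kalmanPredict_snd _ _ hP hQ) hR

theorem kf_posSemidef (M : LGModel n m) (hQ : ∀ k, k < M.T → (M.Q k).PosSemidef)
    (hR : ∀ k, 1 ≤ k → k ≤ M.T → (M.R k).PosDef) (hP0 : M.P0.PosSemidef) :
    ∀ k, k ≤ M.T → (M.kf k).2.PosSemidef := by
  intro k hk
  induction k with
  | zero => exact hP0
  | succ k ih =>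
    have hP := ih (by omega)
    have hQk := hQ k (by omega)
    rw [M.kf_succ_eq_twoFilterCombine k hP hQk (hR (k + 1) (by omega) hk)]
    exact posSemidef_inv_one_add_mul_mul (posSemidef_kalmanPredict_snd _ _ hP hQk)
      (posSemidef_measurementInfo_snd _ _ (hR (k + 1) (by omega) hk))

theorem bif_posSemidef (M : LGModel n m) (hQ : ∀ k, k < M.T → (M.Q k).PosSemidef)
    (hR : ∀ k, 1 ≤ k → k ≤ M.T → (M.R k).PosDef) :
    ∀ j, j < M.T → (M.bif j).2.PosSemidef := by
  intro j hj
  induction j with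
  | zero => exact posSemidef_measurementInfo_snd _ _ (hR M.T (by omega) le_rfl)
  | succ j ih =>
    rw [bif_succ]
    exact (posSemidef_backwardPredict_snd _ _ (ih (by omega)) (hQ _ (by omega))).add
      (posSemidef_measurementInfo_snd _ _ (hR _ (by omega) (by omega)))

theorem twoFilterCombine_kf_bpred_eq_rts (M : LGModel n m)
    (hQ : ∀ k, k < M.T → (M.Q k).PosSemidef)
    (hR : ∀ k, 1 ≤ k → k ≤ M.T → (M.R k).PosDef)
    (hP0 : M.P0.PosSemidef) (k : ℕ) (hkT : k < M.T)
    (hPp : IsUnit (M.F k * (M.kf k).2 * (M.F k)ᵀ + M.Q k))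
    (h : twoFilterCombine (kalmanPredict (M.kf k) (M.F k) (M.Q k) (M.u k)) (M.bif (M.T - k - 1))
      = M.rts (M.T - k - 1)) :
    twoFilterCombine (M.kf k) (M.bpred k) = M.rts (M.T - k) := by
  have hj : M.T - k = M.T - k - 1 + 1 := by omega
  have hk' : M.T - (M.T - k - 1) - 1 = k := by omega
  rw [hj, rts_succ, hk', ← h, bpred_eq]
  exact twoFilterCombine_backwardPredict_eq_rtsStep _ _ (M.kf_posSemidef hQ hR hP0 k hkT.le)
    (M.bif_posSemidef hQ hR _ (by omega)) (hQ k hkT)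
    ((isUnit_iff_isUnit_det _).mp hPp)

/-- At time `k + 1`: fusing `x̄_{k+1|k}` with `(η, J)_{k+1|k+1:T}` gives `x̄_{k+1|T}`. -/
theorem twoFilterCombine_kalmanPredict_bif_eq_rts (M : LGModel n m)
    (hQ : ∀ k, k < M.T → (M.Q k).PosSemidef)
    (hR : ∀ k, 1 ≤ k → k ≤ M.T → (M.R k).PosDef)
    (hP0 : M.P0.PosSemidef)
    (hPp : ∀ k, 1 ≤ k → k ≤ M.T - 1 → IsUnit (M.F k * (M.kf k).2 * (M.F k)ᵀ + M.Q k)) :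
    ∀ k, k < M.T → twoFilterCombine (kalmanPredict (M.kf k) (M.F k) (M.Q k) (M.u k))
      (M.bif (M.T - k - 1)) = M.rts (M.T - k - 1) := by
  intro k hk
  obtain ⟨j, hj⟩ : ∃ j, M.T - k - 1 = j := ⟨_, rfl⟩
  induction j generalizing k with
  | zero =>
    have hT : k + 1 = M.T := by omega
    rw [hj, bif_zero, show M.rts 0 = M.kf M.T from rfl, ← hT]
    exact (M.kf_succ_eq_twoFilterCombine k (M.kf_posSemidef hQ hR hP0 k hk.le) (hQ k hk)
      (hR (k + 1) (by omega) hT.le)).symm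
  | succ j ih =>
    have hj' : M.T - (k + 1) - 1 = j := by omega
    have hstep := M.twoFilterCombine_kf_bpred_eq_rts hQ hR hP0 (k + 1) (by omega)
      (hPp (k + 1) (by omega) (by omega)) (ih (k + 1) (by omega) hj')
    have hP := M.kf_posSemidef hQ hR hP0 k hk.le
    have hRk := hR (k + 1) (by omega) (by omega)
    have hbif : M.bif (j + 1) = measurementInfo (M.H (k + 1)) (M.R (k + 1))
        (M.y (k + 1) - M.d (k + 1)) + M.bpred (k + 1) := by
      rw [bif_succ, add_comm (backwardPredict _ _ _ _), bpred_eq, hj',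
        show M.T - j - 1 = k + 1 by omega]
    rw [hj, hbif, ← twoFilterCombine_twoFilterCombine, ← M.kf_succ_eq_twoFilterCombine k hP
      (hQ k hk) hRk, hstep, show M.T - (k + 1) = j + 1 by omega]
    exact isUnit_det_one_add_mul_of_posSemidef (posSemidef_kalmanPredict_snd _ _ hP (hQ k hk))
      (posSemidef_measurementInfo_snd _ _ hRk)

end LGModel

theorem two_filter_eq_rts_general (M : LGModel n m)
    (hQ : ∀ k, k < M.T → (M.Q k).PosSemidef)
    (hR : ∀ k, 1 ≤ k → k ≤ M.T → (M.R k).PosDef)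
    (hP0 : M.P0.PosSemidef)
    (hPp : ∀ k, 1 ≤ k → k ≤ M.T - 1 → IsUnit (M.F k * (M.kf k).2 * (M.F k)ᵀ + M.Q k)) :
    ∀ k, 1 ≤ k → k ≤ M.T - 1 →
      IsUnit (1 + (M.kf k).2 * (M.bpred k).2) ∧
      (1 + (M.kf k).2 * (M.bpred k).2)⁻¹ *ᵥ ((M.kf k).1 + (M.kf k).2 *ᵥ (M.bpred k).1) =
        (M.rts (M.T - k)).1 ∧
      (1 + (M.kf k).2 * (M.bpred k).2)⁻¹ * (M.kf k).2 = (M.rts (M.T - k)).2 := by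
  intro k hk hkT
  have hJ : (M.bpred k).2.PosSemidef :=
    posSemidef_backwardPredict_snd _ _ (M.bif_posSemidef hQ hR _ (by omega)) (hQ k (by omega))
  have hcombine := M.twoFilterCombine_kf_bpred_eq_rts hQ hR hP0 k (by omega) (hPp k hk hkT)
    (M.twoFilterCombine_kalmanPredict_bif_eq_rts hQ hR hP0 hPp k (by omega))
  refine ⟨?_, congrArg Prod.fst hcombine, congrArg Prod.snd hcombine⟩
  exact (isUnit_iff_isUnit_det _).mpr
    (isUnit_det_one_add_mul_of_posSemidef (M.kf_posSemidef hQ hR hP0 k (by omega)) hJ)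

/-- Equivalence of the two-filter smoother and the RTS smoother: under the
linear-Gaussian model assumptions, if every predicted covariance
`P_{k+1|k} = F_k P_{k|k} F_kᵀ + Q_k` (for `k = 1, …, T-1`) is invertible, then for
every `k = 1, …, T-1` the matrix `I + P_{k|k} J_{k|k+1:T}` is invertible and the
two-filter combination formulas reproduce the RTS smoother output:
`(I + P_{k|k} J_{k|k+1:T})⁻¹ (x̄_{k|k} + P_{k|k} η_{k|k+1:T}) = x̄_{k|T}` and
`(I + P_{k|k} J_{k|k+1:T})⁻¹ P_{k|k} = P_{k|T}`. -/
theorem two_filter_eq_rts (M : LGModel n m) (hT : 1 ≤ M.T)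
    (hQ : ∀ k, k < M.T → (M.Q k).PosSemidef)
    (hR : ∀ k, 1 ≤ k → k ≤ M.T → (M.R k).PosDef)
    (hP0 : M.P0.PosSemidef)
    (hPp : ∀ k, 1 ≤ k → k ≤ M.T - 1 → IsUnit (M.F k * (M.kf k).2 * (M.F k)ᵀ + M.Q k)) :
    ∀ k, 1 ≤ k → k ≤ M.T - 1 →
      IsUnit (1 + (M.kf k).2 * (M.bpred k).2) ∧
      (1 + (M.kf k).2 * (M.bpred k).2)⁻¹ *ᵥ ((M.kf k).1 + (M.kf k).2 *ᵥ (M.bpred k).1) =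
        (M.rts (M.T - k)).1 ∧
      (1 + (M.kf k).2 * (M.bpred k).2)⁻¹ * (M.kf k).2 = (M.rts (M.T - k)).2 :=
  two_filter_eq_rts_general M hQ hR hP0 hPp
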